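/- In a quasi Gelfand triple (H₊, H₀, H₋), the set D₊ ∩ D₋ is dense in H₊ and dense in H₋ with respect to their respective norms. -/

import Mathlib

open Filter Topology
open scoped ComplexInnerProductSpace

noncomputable section

/-- A quasi Gelfand triple `(H₊, H₀, H₋)`, encoded by the two embeddings
`ι₊ : D₊ ⊆ H₊ → H₀` and `ι₋ : D₋ ⊆ H₋ → H₀`: both are injective, closed, densely defined
with dense ranges, and the `H₋`-norm of an element of `D₋` equals the `H₊`-norm of its image
under the adjoint `ι₊*` (which exactly says that `H₋` completes `D₋` under
`‖g‖₋ = sup_{f ∈ D₊} |⟨g, f⟩₀|/‖f‖₊`); moreover `ran ι₋` is all of `dom ι₊*`. -/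
structure QuasiGelfandTriple (Hp H₀ Hm : Type*)
    [NormedAddCommGroup Hp] [InnerProductSpace ℂ Hp] [CompleteSpace Hp]
    [NormedAddCommGroup H₀] [InnerProductSpace ℂ H₀] [CompleteSpace H₀]
    [NormedAddCommGroup Hm] [InnerProductSpace ℂ Hm] [CompleteSpace Hm] where
  ip : Hp →ₗ.[ℂ] H₀
  im : Hm →ₗ.[ℂ] H₀
  ip_dense_dom : Dense (ip.domain : Set Hp)
  im_dense_dom : Dense (im.domain : Set Hm)
  ip_closed : IsClosed {p : Hp × H₀ | ∃ f : ip.domain, (f : Hp) = p.1 ∧ ip f = p.2}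
  im_closed : IsClosed {p : Hm × H₀ | ∃ g : im.domain, (g : Hm) = p.1 ∧ im g = p.2}
  ip_injective : ∀ f : ip.domain, ip f = 0 → (f : Hp) = 0
  im_injective : ∀ g : im.domain, im g = 0 → (g : Hm) = 0
  ip_dense_ran : Dense (Set.range fun f : ip.domain => ip f)
  im_dense_ran : Dense (Set.range fun g : im.domain => im g)
  riesz : ∀ g : im.domain, ∃ v : Hp,
    (∀ f : ip.domain, ⟪im g, ip f⟫ = ⟪v, (f : Hp)⟫) ∧ ‖v‖ = ‖(g : Hm)‖
  ran_im : ∀ (u : H₀) (v : Hp),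
    (∀ f : ip.domain, ⟪u, ip f⟫ = ⟪v, (f : Hp)⟫) → ∃ g : im.domain, im g = u

/-! For a closed, densely defined `T`, project `(x, 0)` onto the graph of `T` in the Hilbert sum
`E ⊕ F`: if `x ⊥ dom T*T`, the projection vanishes, and then `x = 0`. So `dom T*T` is dense, and
for `T = ι₊` this domain is `D₊ ∩ D₋`, because `dom ι₊* = ran ι₋`.
For `T = ι₋` we need `dom ι₋* ⊆ ran ι₊`. If `⟪u, ι₋ g⟫ = ⟪w, g⟫` on `D₋`, let `Ā : H₋ → H₊` be
the isometric extension of `ι₊*ι₋`; then `(Ā w, u)` is orthogonal to `G(ι₊)ᗮ = {(-ι₊* y, y)}`,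
hence lies in the closed graph `G(ι₊)`. -/

open scoped InnerProductSpace

namespace LinearPMap

variable {𝕜 E F : Type*} [RCLike 𝕜]
  [NormedAddCommGroup E] [InnerProductSpace 𝕜 E] [NormedAddCommGroup F] [InnerProductSpace 𝕜 F]
  {T : E →ₗ.[𝕜] F}

variable (T) in
def graphL2 : Submodule 𝕜 (WithLp 2 (E × F)) :=
  T.graph.comap (WithLp.linearEquiv 2 𝕜 (E × F)).toLinearMap

theorem mem_graphL2 {z : WithLp 2 (E × F)} :
    z ∈ T.graphL2 ↔ ∃ f : T.domain, (f : E) = z.fst ∧ T f = z.snd :=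
  T.mem_graph_iff

theorem IsClosed.isClosed_graphL2 (hT : T.IsClosed) :
    _root_.IsClosed (T.graphL2 : Set (WithLp 2 (E × F))) :=
  hT.preimage (WithLp.prod_continuous_ofLp 2 E F)

theorem inner_add_inner_eq_zero_of_mem_graphL2_orthogonal {z : WithLp 2 (E × F)}
    (hz : z ∈ T.graphL2ᗮ) (f : T.domain) :
    ⟪z.fst, (f : E)⟫_𝕜 + ⟪z.snd, T f⟫_𝕜 = 0 :=
  Submodule.inner_left_of_mem_orthogonal (u := WithLp.toLp 2 ((f : E), T f)) (T.mem_graph f) hz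

theorem adjoint_apply_of_mem_graphL2_orthogonal [CompleteSpace E] (hT : Dense (T.domain : Set E))
    {z : WithLp 2 (E × F)} (hz : z ∈ T.graphL2ᗮ) :
    ∃ hy : z.snd ∈ T†.domain, T† ⟨_, hy⟩ = -z.fst := by
  have h (f : T.domain) : ⟪-z.fst, (f : E)⟫_𝕜 = ⟪z.snd, T f⟫_𝕜 := by
    rw [inner_neg_left, neg_eq_iff_add_eq_zero]
    exact inner_add_inner_eq_zero_of_mem_graphL2_orthogonal hz f
  exact ⟨mem_adjoint_domain_of_exists _ ⟨_, h⟩, adjoint_apply_eq hT _ h⟩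

theorem IsClosed.dense_domain_adjoint_comp_self [CompleteSpace E] [CompleteSpace F]
    (hT : T.IsClosed) (hdense : Dense (T.domain : Set E)) :
    Dense {x : E | ∃ f : T.domain, (f : E) = x ∧ T f ∈ T†.domain} := by
  let S : Submodule 𝕜 E := (T†.domain.comap T.toFun).map T.domain.subtype
  have hS : (S : Set E) = {x : E | ∃ f : T.domain, (f : E) = x ∧ T f ∈ T†.domain} := by
    ext; simp [S, and_comm]
  rw [← hS, Submodule.dense_iff_topologicalClosure_eq_top, Submodule.topologicalClosure_eq_top_iff,
    Submodule.eq_bot_iff]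
  intro x hx
  have : CompleteSpace T.graphL2 := hT.isClosed_graphL2.completeSpace_coe
  obtain ⟨y, hy, z, hz, hyz⟩ := T.graphL2.exists_add_mem_mem_orthogonal (WithLp.toLp 2 (x, 0))
  obtain ⟨f, hf1, hf2⟩ := mem_graphL2.mp hy
  obtain ⟨hdom, hadj⟩ := adjoint_apply_of_mem_graphL2_orthogonal hdense hz
  have hz2 : z.snd = -T f := by
    have h : 0 = y.snd + z.snd := congrArg WithLp.snd hyz
    rw [hf2, neg_eq_of_add_eq_zero_right h.symm]
  have hfS : (f : E) ∈ S := ⟨f, by simpa [hz2] using hdom, rfl⟩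
  have hy0 : y = 0 := inner_self_eq_zero.mp <| calc
    ⟪y, y⟫_𝕜 = ⟪y, WithLp.toLp 2 (x, 0)⟫_𝕜 := by
      rw [hyz, inner_add_right, Submodule.inner_right_of_mem_orthogonal hy hz, add_zero]
    _ = ⟪(f : E), x⟫_𝕜 := by simp [hf1]
    _ = 0 := hx f hfS
  rw [hy0, zero_add] at hyz
  subst hyz
  rw [show (⟨_, hdom⟩ : T†.domain) = 0 from rfl, LinearPMap.map_zero] at hadj
  simpa using hadj

theorem IsClosed.mem_graph_of_forall_inner_adjoint [CompleteSpace E] [CompleteSpace F]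
    (hT : T.IsClosed) (hdense : Dense (T.domain : Set E)) {a : E} {u : F}
    (h : ∀ y : T†.domain, ⟪(y : F), u⟫_𝕜 = ⟪T† y, a⟫_𝕜) : (a, u) ∈ T.graph := by
  have : CompleteSpace T.graphL2 := hT.isClosed_graphL2.completeSpace_coe
  change WithLp.toLp 2 (a, u) ∈ T.graphL2
  rw [← T.graphL2.orthogonal_orthogonal, Submodule.mem_orthogonal]
  intro z hz
  obtain ⟨hdom, hadj⟩ := adjoint_apply_of_mem_graphL2_orthogonal hdense hz
  have hu : ⟪z.snd, u⟫_𝕜 = -⟪z.fst, a⟫_𝕜 := by simpa [hadj] using h ⟨_, hdom⟩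
  simp [hu]

end LinearPMap

namespace QuasiGelfandTriple

open LinearPMap

variable {Hp H₀ Hm : Type*}
    [NormedAddCommGroup Hp] [InnerProductSpace ℂ Hp] [CompleteSpace Hp]
    [NormedAddCommGroup H₀] [InnerProductSpace ℂ H₀] [CompleteSpace H₀]
    [NormedAddCommGroup Hm] [InnerProductSpace ℂ Hm] [CompleteSpace Hm]
    (Q : QuasiGelfandTriple Hp H₀ Hm)

theorem ip_isClosed : Q.ip.IsClosed := by
  have : (Q.ip.graph : Set (Hp × H₀)) =
      {p | ∃ f : Q.ip.domain, (f : Hp) = p.1 ∧ Q.ip f = p.2} :=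
    Set.ext fun _ => Q.ip.mem_graph_iff
  rw [LinearPMap.IsClosed, this]
  exact Q.ip_closed

theorem im_isClosed : Q.im.IsClosed := by
  have : (Q.im.graph : Set (Hm × H₀)) =
      {p | ∃ g : Q.im.domain, (g : Hm) = p.1 ∧ Q.im g = p.2} :=
    Set.ext fun _ => Q.im.mem_graph_iff
  rw [LinearPMap.IsClosed, this]
  exact Q.im_closed

theorem im_mem_adjoint_ip_domain (g : Q.im.domain) : Q.im g ∈ Q.ip†.domain := by
  obtain ⟨v, hv, -⟩ := Q.riesz g
  exact mem_adjoint_domain_of_exists _ ⟨v, fun f => (hv f).symm⟩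

theorem exists_im_eq_of_mem_adjoint_ip_domain {y : H₀} (hy : y ∈ Q.ip†.domain) :
    ∃ g : Q.im.domain, Q.im g = y :=
  Q.ran_im y (Q.ip† ⟨y, hy⟩) fun f => (adjoint_isFormalAdjoint Q.ip_dense_dom ⟨y, hy⟩ f).symm

/-- `ι₊* ∘ ι₋`. -/
def adjointIm : Q.im.domain →ₗᵢ[ℂ] Hp where
  toLinearMap := Q.ip†.toFun ∘ₗ Q.im.toFun.codRestrict _ Q.im_mem_adjoint_ip_domain
  norm_map' g := by
    obtain ⟨v, hv, hnorm⟩ := Q.riesz g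
    change ‖Q.ip† ⟨Q.im g, _⟩‖ = ‖(g : Hm)‖
    rw [← hnorm]
    exact congrArg norm (adjoint_apply_eq Q.ip_dense_dom _ fun f => (hv f).symm)

theorem adjointIm_apply (g : Q.im.domain) :
    Q.adjointIm g = Q.ip† ⟨Q.im g, Q.im_mem_adjoint_ip_domain g⟩ :=
  rfl

def adjointImExtension : Hm →L[ℂ] Hp :=
  Q.adjointIm.toContinuousLinearMap.extend (Submodule.subtypeL Q.im.domain)

theorem adjointImExtension_coe (g : Q.im.domain) :
    Q.adjointImExtension (g : Hm) = Q.adjointIm g :=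
  ContinuousLinearMap.extend_eq _ Q.im_dense_dom.denseRange_val
    isUniformEmbedding_subtype_val.isUniformInducing g

theorem inner_adjointIm_adjointImExtension (g : Q.im.domain) (w : Hm) :
    ⟪Q.adjointIm g, Q.adjointImExtension w⟫ = ⟪(g : Hm), w⟫ := by
  refine congrFun (Continuous.ext_on (f := fun w => ⟪Q.adjointIm g, Q.adjointImExtension w⟫)
    (g := fun w => ⟪(g : Hm), w⟫) Q.im_dense_dom (by fun_prop) (by fun_prop) ?_) w
  intro v hv
  lift v to Q.im.domain using hv
  simp only [adjointImExtension_coe, LinearIsometry.inner_map_map, Submodule.coe_inner]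

theorem exists_ip_eq_of_inner_im {u : H₀} {w : Hm}
    (h : ∀ g : Q.im.domain, ⟪u, Q.im g⟫ = ⟪w, (g : Hm)⟫) : ∃ f : Q.ip.domain, Q.ip f = u := by
  suffices (Q.adjointImExtension w, u) ∈ Q.ip.graph by
    obtain ⟨f, -, hf⟩ := Q.ip.mem_graph_iff.mp this
    exact ⟨f, hf⟩
  refine Q.ip_isClosed.mem_graph_of_forall_inner_adjoint Q.ip_dense_dom fun ⟨y, hy⟩ => ?_
  obtain ⟨g, rfl⟩ := Q.exists_im_eq_of_mem_adjoint_ip_domain hy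
  rw [← adjointIm_apply, inner_adjointIm_adjointImExtension, ← inner_conj_symm, h g,
    inner_conj_symm]

theorem exists_ip_eq_of_mem_adjoint_im_domain {y : H₀} (hy : y ∈ Q.im†.domain) :
    ∃ f : Q.ip.domain, Q.ip f = y :=
  Q.exists_ip_eq_of_inner_im fun g => (adjoint_isFormalAdjoint Q.im_dense_dom ⟨y, hy⟩ g).symm

end QuasiGelfandTriple

/-- In a quasi Gelfand triple `(H₊, H₀, H₋)`, the set `D₊ ∩ D₋` is
dense in `H₊` and dense in `H₋` with respect to their respective norms. -/
theorem stmt14 {Hp H₀ Hm : Type*}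
    [NormedAddCommGroup Hp] [InnerProductSpace ℂ Hp] [CompleteSpace Hp]
    [NormedAddCommGroup H₀] [InnerProductSpace ℂ H₀] [CompleteSpace H₀]
    [NormedAddCommGroup Hm] [InnerProductSpace ℂ Hm] [CompleteSpace Hm]
    (Q : QuasiGelfandTriple Hp H₀ Hm) :
    Dense {x : Hp | ∃ f : Q.ip.domain, (f : Hp) = x ∧ ∃ g : Q.im.domain, Q.im g = Q.ip f} ∧
    Dense {y : Hm | ∃ g : Q.im.domain, (g : Hm) = y ∧ ∃ f : Q.ip.domain, Q.ip f = Q.im g} := by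
  constructor
  · refine (Q.ip_isClosed.dense_domain_adjoint_comp_self Q.ip_dense_dom).mono ?_
    rintro _ ⟨f, hf, hy⟩
    exact ⟨f, hf, Q.exists_im_eq_of_mem_adjoint_ip_domain hy⟩
  · refine (Q.im_isClosed.dense_domain_adjoint_comp_self Q.im_dense_dom).mono ?_
    rintro _ ⟨g, hg, hy⟩
    exact ⟨g, hg, Q.exists_ip_eq_of_mem_adjoint_im_domain hy⟩
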